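/- Let 𝓛 be a collection of lines in ℝ^n, none perpendicular to the first coordinate axis, parametrized as ℓ(a,b) = {(t, at+b) : t ∈ ℝ} with slope D(ℓ(a,b)) = a ∈ ℝ^{n−1}. Let E ⊆ ℝ^n be arbitrary and C ⊆ ℝ^{n−1} bounded. Then there exist a collection 𝓛' of lines and a set E' ⊆ ℝ^n such that: (1) dim_H(E') ≤ dim_H(E) + ubdim(C); (2) the set of slopes of 𝓛' equals D(𝓛) + C; (3) for every ℓ' ∈ 𝓛' there is ℓ ∈ 𝓛 with proj₁(E ∩ ℓ) ⊆ proj₁(E' ∩ ℓ'); and if E and C are compact then E' can be taken compact. -/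

import Mathlib

open Set Filter MeasureTheory Metric Bornology
open scoped ENNReal NNReal Topology Pointwise

noncomputable def covN {X : Type*} [PseudoMetricSpace X] (E : Set X) (δ : ℝ) : ℕ :=
  sInf {k : ℕ | ∃ S : Finset X, S.card = k ∧ E ⊆ ⋃ x ∈ S, Metric.ball x δ}

/-- Upper Minkowski (box) dimension. -/
noncomputable def ubDim {X : Type*} [PseudoMetricSpace X] (E : Set X) : ℝ≥0∞ :=
  ENNReal.ofReal
    (Filter.limsup (fun δ : ℝ => Real.log (covN E δ) / Real.log (1 / δ)) (𝓝[>] (0:ℝ)))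

/-- Packing dimension, via countable covers by bounded sets. -/
noncomputable def packDim {X : Type*} [PseudoMetricSpace X] (E : Set X) : ℝ≥0∞ :=
  ⨅ (F : ℕ → Set X) (_ : E ⊆ ⋃ i, F i) (_ : ∀ i, Bornology.IsBounded (F i)),
    ⨆ i, ubDim (F i)

lemma coord_abs_le_norm {n : ℕ} (y : EuclideanSpace ℝ (Fin n)) (i : Fin n) : |y i| ≤ ‖y‖ := by
  rw [EuclideanSpace.norm_eq, ← Real.sqrt_sq_eq_abs]
  apply Real.sqrt_le_sqrt
  have := Finset.single_le_sum (f := fun j => ‖y j‖ ^ 2) (fun j _ => by positivity)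
    (Finset.mem_univ i)
  simpa [Real.norm_eq_abs, sq_abs] using this

lemma grid_cover {n : ℕ} {C : Set (EuclideanSpace ℝ (Fin n))} {R : ℝ} (hR : 0 ≤ R)
    (hC : C ⊆ Metric.closedBall 0 R) {δ : ℝ} (hδ : 0 < δ) (hδ1 : δ ≤ 1) :
    ∃ S : Finset (EuclideanSpace ℝ (Fin n)),
      C ⊆ ⋃ x ∈ S, Metric.ball x δ ∧ (S.card : ℝ) ≤ ((2*R*(n+1)+5)/δ)^n := by
  classical
  set ε : ℝ := δ / (n+1) with hε
  have hεpos : 0 < ε := by positivity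
  obtain ⟨m, hmR1, hmR'⟩ : ∃ m : ℕ, R / ε + 1 ≤ (m:ℝ) ∧ (m:ℝ) ≤ R / ε + 2 :=
    ⟨⌈R / ε⌉₊ + 1, by push_cast; linarith [Nat.le_ceil (R/ε)],
      by push_cast; linarith [Nat.ceil_lt_add_one (by positivity : (0:ℝ) ≤ R / ε)]⟩
  have hmR : R / ε ≤ (m : ℝ) := by linarith
  set φ : (Fin n → ℤ) → EuclideanSpace ℝ (Fin n) := fun k => WithLp.toLp 2 (fun i => (k i : ℝ) * ε) with hφ
  set S₀ : Finset (Fin n → ℤ) := Finset.Icc (fun _ => -(m:ℤ)) (fun _ => (m:ℤ)) with hS₀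
  refine ⟨S₀.image φ, ?_, ?_⟩
  · intro y hy
    have hynorm : ‖y‖ ≤ R := by
      simpa [Metric.mem_closedBall, dist_zero_right] using hC hy
    have hcoord : ∀ i, |y i| ≤ R := fun i => (coord_abs_le_norm y i).trans hynorm
    set k : Fin n → ℤ := fun i => ⌊y i / ε⌋ with hk
    have hkmem : k ∈ S₀ := by
      rw [hS₀, Finset.mem_Icc]
      constructor <;> intro i <;> simp only [hk]
      · have hfl := Int.sub_one_lt_floor (y i / ε)
        have h2 : -R / ε ≤ y i / ε := by
          gcongr; exact (abs_le.mp (hcoord i)).1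
        have h1 : (-(m:ℤ) : ℝ) ≤ (⌊y i / ε⌋ : ℝ) := by
          push_cast
          rw [neg_div] at h2
          linarith [hmR1]
        exact_mod_cast h1
      · have h1 : (⌊y i / ε⌋ : ℝ) ≤ ((m:ℤ) : ℝ) := by
          have h2 : y i / ε ≤ R / ε := by
            gcongr; exact (abs_le.mp (hcoord i)).2
          push_cast
          exact (Int.floor_le _).trans (h2.trans hmR)
        exact_mod_cast h1
    refine Set.mem_iUnion₂.mpr ⟨φ k, Finset.mem_image_of_mem φ hkmem, ?_⟩
    rw [Metric.mem_ball, EuclideanSpace.dist_eq]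
    have hterm : ∀ i, dist (y i) (φ k i) ^ 2 ≤ ε ^ 2 := by
      intro i
      have h1 : (⌊y i / ε⌋ : ℝ) * ε ≤ y i := by
        rw [← le_div_iff₀ hεpos]; exact Int.floor_le _
      have h2 : y i ≤ ((⌊y i / ε⌋ : ℝ) + 1) * ε := by
        rw [← div_le_iff₀ hεpos]; exact (Int.lt_floor_add_one _).le
      have habs : |y i - φ k i| ≤ ε := by
        simp only [hφ, hk, PiLp.toLp_apply]
        rw [abs_le]; constructor <;> nlinarith
      calc dist (y i) (φ k i) ^ 2 = |y i - φ k i| ^ 2 := by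
            simp [Real.dist_eq, sq_abs]
        _ ≤ ε ^ 2 := by nlinarith [abs_nonneg (y i - φ k i)]
    have hsum : (∑ i, dist (y i) (φ k i) ^ 2) ≤ n * ε ^ 2 := by
      calc (∑ i, dist (y i) (φ k i) ^ 2) ≤ ∑ _i : Fin n, ε ^ 2 :=
            Finset.sum_le_sum fun i _ => hterm i
        _ = n * ε ^ 2 := by simp [mul_comm]
    rw [Real.sqrt_lt' hδ]
    have hlt : (n : ℝ) * ε ^ 2 < δ ^ 2 := by
      rw [hε, div_pow]
      rw [mul_div_assoc']
      rw [div_lt_iff₀ (by positivity)]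
      nlinarith [Nat.cast_nonneg (α := ℝ) n, pow_pos hδ 2, sq_nonneg (n:ℝ)]
    linarith
  · calc ((S₀.image φ).card : ℝ) ≤ (S₀.card : ℝ) := by exact_mod_cast Finset.card_image_le
      _ = ((2*m+1 : ℕ) : ℝ) ^ n := by
          rw [hS₀, Pi.card_Icc]
          have hcard : ∀ i : Fin n, (Finset.Icc (-(m:ℤ)) (m:ℤ)).card = 2*m+1 := by
            intro i
            rw [Int.card_Icc]
            omega
          rw [Finset.prod_congr rfl (fun i _ => hcard i), Finset.prod_const, Finset.card_univ,
            Fintype.card_fin]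
          push_cast; ring
      _ ≤ ((2*R*(n+1)+5)/δ)^n := by
          apply pow_le_pow_left₀ (by positivity)
          have h5 : (5:ℝ) ≤ 5 / δ := by
            rw [le_div_iff₀ hδ]; nlinarith
          have hm2 : (m:ℝ) ≤ R * (n+1) / δ + 2 := by
            rw [hε, div_div_eq_mul_div] at hmR'
            linarith
          have : (2*R*(n+1))/δ = 2 * (R*(n+1)/δ) := by ring
          rw [add_div, this]
          push_cast
          linarith

lemma covN_spec {n : ℕ} {C : Set (EuclideanSpace ℝ (Fin n))} {R : ℝ} (hR : 0 ≤ R)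
    (hC : C ⊆ Metric.closedBall 0 R) {δ : ℝ} (hδ : 0 < δ) (hδ1 : δ ≤ 1) :
    (∃ S : Finset (EuclideanSpace ℝ (Fin n)), S.card = covN C δ ∧
      C ⊆ ⋃ x ∈ S, Metric.ball x δ) ∧ (covN C δ : ℝ) ≤ ((2*R*(n+1)+5)/δ)^n := by
  obtain ⟨S, hcov, hcard⟩ := grid_cover hR hC hδ hδ1
  have hne : {k : ℕ | ∃ S : Finset (EuclideanSpace ℝ (Fin n)), S.card = k ∧
      C ⊆ ⋃ x ∈ S, Metric.ball x δ}.Nonempty := ⟨S.card, S, rfl, hcov⟩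
  constructor
  · obtain ⟨S', hS', hcov'⟩ := Nat.sInf_mem hne
    exact ⟨S', hS', hcov'⟩
  · have h1 : covN C δ ≤ S.card := Nat.sInf_le ⟨S, rfl, hcov⟩
    exact le_trans (by exact_mod_cast h1) hcard

lemma ubDim_aux_bdd {n : ℕ} {C : Set (EuclideanSpace ℝ (Fin n))} (hC : Bornology.IsBounded C) :
    IsBoundedUnder (· ≤ ·) (𝓝[>] (0:ℝ))
      (fun δ => Real.log (covN C δ) / Real.log (1 / δ)) := by
  obtain ⟨R₀, hR₀⟩ := hC.subset_closedBall 0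
  set R : ℝ := max R₀ 0 with hRdef
  have hR : 0 ≤ R := le_max_right _ _
  have hCR : C ⊆ Metric.closedBall 0 R :=
    hR₀.trans (Metric.closedBall_subset_closedBall (le_max_left _ _))
  set c : ℝ := 2*R*(n+1)+5 with hcdef
  have hc1 : 1 ≤ c := by
    have : (0:ℝ) ≤ 2*R*(n+1) := by positivity
    linarith
  refine ⟨n * Real.log c + n, eventually_map.mpr ?_⟩
  have hmem : Set.Ioo (0:ℝ) (min 1 (Real.exp (-1))) ∈ 𝓝[>] (0:ℝ) :=
    Ioo_mem_nhdsGT_of_mem ⟨le_refl 0, lt_min one_pos (Real.exp_pos _)⟩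
  filter_upwards [hmem] with δ hδ
  obtain ⟨hδ0, hδlt⟩ := hδ
  have hδ1 : δ ≤ 1 := (hδlt.trans_le (min_le_left _ _)).le
  have hL : 1 ≤ Real.log (1/δ) := by
    have h1 : Real.log δ < -1 := by
      have := Real.log_lt_log hδ0 (hδlt.trans_le (min_le_right _ _))
      simpa [Real.log_exp] using this
    rw [one_div, Real.log_inv]
    linarith
  have hL0 : 0 < Real.log (1/δ) := lt_of_lt_of_le one_pos hL
  have hcount := (covN_spec hR hCR hδ0 hδ1).2
  have hcδ1 : 1 ≤ c / δ := by
    rw [le_div_iff₀ hδ0]; nlinarith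
  have hlogN : Real.log (covN C δ) ≤ n * Real.log c + n * Real.log (1/δ) := by
    have hkey : Real.log (covN C δ) ≤ Real.log ((c/δ)^n) := by
      rcases Nat.eq_zero_or_pos (covN C δ) with h0 | hpos
      · rw [h0]
        simpa using Real.log_nonneg (one_le_pow₀ hcδ1)
      · apply Real.log_le_log (by exact_mod_cast hpos) hcount
    have heq : Real.log ((c/δ)^n) = n * Real.log c + n * Real.log (1/δ) := by
      rw [Real.log_pow, Real.log_div (by linarith) (ne_of_gt hδ0), one_div, Real.log_inv]
      ring
    linarith
  have hlogc : 0 ≤ Real.log c := Real.log_nonneg hc1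
  calc Real.log (covN C δ) / Real.log (1/δ)
      ≤ (n * Real.log c + n * Real.log (1/δ)) / Real.log (1/δ) := by gcongr
    _ = n * Real.log c / Real.log (1/δ) + n := by
        field_simp
    _ ≤ n * Real.log c + n := by
        have := div_le_self (by positivity : (0:ℝ) ≤ n * Real.log c) hL
        linarith

lemma cov_extract {n : ℕ} {C : Set (EuclideanSpace ℝ (Fin n))} (hC : Bornology.IsBounded C)
    {d : ℝ≥0} (hd : ubDim C < d) :
    ∃ δ₀ : ℝ, 0 < δ₀ ∧ ∀ δ : ℝ, 0 < δ → δ < δ₀ →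
      ∃ S : Finset (EuclideanSpace ℝ (Fin n)), C ⊆ ⋃ x ∈ S, Metric.ball x δ ∧
        (S.card : ℝ≥0∞) ≤ ENNReal.ofReal (1/δ) ^ (d:ℝ) := by
  obtain ⟨R₀, hR₀⟩ := hC.subset_closedBall 0
  set R : ℝ := max R₀ 0 with hRdef
  have hR : 0 ≤ R := le_max_right _ _
  have hCR : C ⊆ Metric.closedBall 0 R :=
    hR₀.trans (Metric.closedBall_subset_closedBall (le_max_left _ _))
  have hΛ : Filter.limsup (fun δ : ℝ => Real.log (covN C δ) / Real.log (1 / δ)) (𝓝[>] (0:ℝ))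
      < (d:ℝ) := by
    by_contra h
    push_neg at h
    have := ENNReal.ofReal_le_ofReal h
    rw [ENNReal.ofReal_coe_nnreal] at this
    exact absurd (this.trans_lt hd) (lt_irrefl _)
  have hev : ∀ᶠ δ in 𝓝[>] (0:ℝ),
      Real.log (covN C δ) / Real.log (1/δ) < (d:ℝ) :=
    eventually_lt_of_limsup_lt hΛ (ubDim_aux_bdd hC)
  have hev2 : ∀ᶠ δ in 𝓝[>] (0:ℝ), δ ∈ Set.Ioo (0:ℝ) (min 1 (Real.exp (-1))) :=
    Ioo_mem_nhdsGT_of_mem ⟨le_refl 0, lt_min one_pos (Real.exp_pos _)⟩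
  obtain ⟨u, hu0, hsub⟩ := mem_nhdsGT_iff_exists_Ioo_subset.mp (hev.and hev2)
  refine ⟨min u 1, lt_min hu0 one_pos, fun δ hδ0 hδu => ?_⟩
  have hδmem := hsub ⟨hδ0, hδu.trans_le (min_le_left _ _)⟩
  obtain ⟨hlt, _, hδe⟩ := hδmem
  have hδ1 : δ ≤ 1 := (hδu.trans_le (min_le_right _ _)).le
  have hL0 : 0 < Real.log (1/δ) := by
    rw [one_div, Real.log_inv]
    have h1 : Real.log δ < -1 := by
      have := Real.log_lt_log hδ0 (hδe.trans_le (min_le_right _ _))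
      simpa [Real.log_exp] using this
    linarith
  obtain ⟨⟨S, hScard, hScov⟩, _⟩ := covN_spec hR hCR hδ0 hδ1
  refine ⟨S, hScov, ?_⟩
  have hbound : (S.card : ℝ) ≤ (1/δ) ^ (d:ℝ) := by
    rw [hScard]
    rcases Nat.eq_zero_or_pos (covN C δ) with h0 | hpos
    · rw [h0]
      norm_num
      positivity
    · have h1 : Real.log (covN C δ) < (d:ℝ) * Real.log (1/δ) := by
        rw [div_lt_iff₀ hL0] at hlt; exact hlt
      have h2 : (covN C δ : ℝ) = Real.exp (Real.log (covN C δ)) :=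
        (Real.exp_log (by exact_mod_cast hpos)).symm
      rw [h2, Real.rpow_def_of_pos (by positivity)]
      rw [mul_comm] at h1
      exact (Real.exp_lt_exp.mpr h1).le
  calc (S.card : ℝ≥0∞) = ENNReal.ofReal (S.card : ℝ) := by
        rw [ENNReal.ofReal_natCast]
    _ ≤ ENNReal.ofReal ((1/δ) ^ (d:ℝ)) := ENNReal.ofReal_le_ofReal hbound
    _ = ENNReal.ofReal (1/δ) ^ (d:ℝ) := by
        rw [← ENNReal.ofReal_rpow_of_pos (by positivity)]


lemma core {X Y Z : Type*} [MetricSpace X] [MetricSpace Y] [MetricSpace Z]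
    (A : Set X) (C : Set Y) (f : X × Y → Z) (K : ℝ≥0)
    (hf : LipschitzOnWith K f (A ×ˢ C))
    (s d : ℝ≥0) (hs : 0 < s) (hA : dimH A < s)
    (δ₀ : ℝ) (hδ₀ : 0 < δ₀)
    (hcov : ∀ δ : ℝ, 0 < δ → δ < δ₀ →
      ∃ S : Finset Y, C ⊆ ⋃ x ∈ S, Metric.ball x δ ∧
        (S.card : ℝ≥0∞) ≤ ENNReal.ofReal (1/δ) ^ (d:ℝ)) :
    dimH (f '' (A ×ˢ C)) ≤ (s:ℝ≥0∞) + d := by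
  classical
  borelize X Z
  have hsd : (0:ℝ) < (s:ℝ) + (d:ℝ) := by positivity
  have hμA : μH[(s:ℝ)] A = 0 := hausdorffMeasure_of_dimH_lt hA
  set ρ : ℕ → ℝ := fun m => (min δ₀ 1 / 2) * (2⁻¹)^m with hρdef
  have hρpos : ∀ m, 0 < ρ m := fun m => by
    have : 0 < min δ₀ 1 := lt_min hδ₀ one_pos
    positivity
  have hρδ₀ : ∀ m, ρ m < δ₀ := fun m => by
    have h1 : (2⁻¹:ℝ)^m ≤ 1 := pow_le_one₀ (by norm_num) (by norm_num)
    have h2 : min δ₀ 1 ≤ δ₀ := min_le_left _ _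
    have h3 : 0 < min δ₀ 1 := lt_min hδ₀ one_pos
    calc ρ m ≤ min δ₀ 1 / 2 * 1 := by
          apply mul_le_mul_of_nonneg_left h1 (by linarith)
      _ < δ₀ := by rw [mul_one]; linarith
  have hρ1 : ∀ m, ρ m ≤ 1 := fun m => by
    have h1 : (2⁻¹:ℝ)^m ≤ 1 := pow_le_one₀ (by norm_num) (by norm_num)
    have h2 : min δ₀ 1 ≤ 1 := min_le_right _ _
    have h3 : 0 < min δ₀ 1 := lt_min hδ₀ one_pos
    calc ρ m ≤ min δ₀ 1 / 2 * 1 := by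
          apply mul_le_mul_of_nonneg_left h1 (by linarith)
      _ ≤ 1 := by linarith
  set G : ℝ≥0∞ := ∑' n : ℕ, (((2:ℝ≥0∞))⁻¹ ^ (s:ℝ)) ^ n with hGdef
  set M : ℝ≥0∞ := ENNReal.ofReal (2*(K:ℝ)+2) ^ ((s:ℝ)+(d:ℝ)) with hMdef
  set B : ℝ≥0∞ := M * (1 + G) with hBdef
  have hBne : B ≠ ⊤ := by
    have hq1 : ((2:ℝ≥0∞))⁻¹ ^ (s:ℝ) < 1 := by
      apply ENNReal.rpow_lt_one (by simp [ENNReal.inv_lt_one] : ((2:ℝ≥0∞))⁻¹ < 1)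
        (by exact_mod_cast hs)
    have hGne : G ≠ ⊤ := by
      rw [hGdef, ENNReal.tsum_geometric]
      exact ENNReal.inv_ne_top.mpr (tsub_pos_iff_lt.mpr hq1).ne'
    have hMne : M ≠ ⊤ := ENNReal.rpow_ne_top_of_nonneg hsd.le ENNReal.ofReal_ne_top
    exact ENNReal.mul_ne_top hMne (ENNReal.add_ne_top.mpr ⟨ENNReal.one_ne_top, hGne⟩)
  have hcovers : ∀ m : ℕ, ∃ t : ℕ × ℕ → Set Z,
      (f '' (A ×ˢ C) ⊆ ⋃ i, t i) ∧
      (∀ i, EMetric.diam (t i) ≤ ENNReal.ofReal ((2*(K:ℝ)+2) * ρ m)) ∧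
      (∑' i, EMetric.diam (t i) ^ ((s:ℝ)+(d:ℝ)) ≤ B) := by
    intro m
    have hs' : (0:ℝ) < (s:ℝ) := by exact_mod_cast hs
    have hiInf : (⨅ (U : ℕ → Set X) (_ : A ⊆ ⋃ k, U k)
        (_ : ∀ k, EMetric.diam (U k) ≤ ENNReal.ofReal (ρ m)),
        ∑' k, ⨆ _ : (U k).Nonempty, EMetric.diam (U k) ^ (s:ℝ)) < 1 := by
      have h1 : (⨅ (U : ℕ → Set X) (_ : A ⊆ ⋃ k, U k)
          (_ : ∀ k, EMetric.diam (U k) ≤ ENNReal.ofReal (ρ m)),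
          ∑' k, ⨆ _ : (U k).Nonempty, EMetric.diam (U k) ^ (s:ℝ)) ≤ μH[(s:ℝ)] A := by
        rw [MeasureTheory.Measure.hausdorffMeasure_apply]
        exact le_iSup₂ (f := fun (r : ℝ≥0∞) (_ : 0 < r) =>
          ⨅ (U : ℕ → Set X) (_ : A ⊆ ⋃ k, U k) (_ : ∀ k, EMetric.diam (U k) ≤ r),
            ∑' k, ⨆ _ : (U k).Nonempty, EMetric.diam (U k) ^ (s:ℝ))
          (ENNReal.ofReal (ρ m)) (ENNReal.ofReal_pos.mpr (hρpos m))
      rw [hμA] at h1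
      exact lt_of_le_of_lt h1 one_pos
    simp only [iInf_lt_iff] at hiInf
    obtain ⟨U, hUcov, hUdiam, hUsum⟩ := hiInf
    set δn : ℕ → ℝ := fun k => max (EMetric.diam (U k)).toReal (ρ m * 2⁻¹ ^ k) with hδndef
    have hδnpos : ∀ k, 0 < δn k := fun k => lt_max_of_lt_right (by positivity)
    have hδnρ : ∀ k, δn k ≤ ρ m := fun k => by
      apply max_le
      · exact ENNReal.toReal_le_of_le_ofReal (hρpos m).le (hUdiam k)
      · calc ρ m * 2⁻¹^k ≤ ρ m * 1 :=
            mul_le_mul_of_nonneg_left (pow_le_one₀ (by norm_num) (by norm_num)) (hρpos m).le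
          _ = ρ m := mul_one _
    have hδnδ₀ : ∀ k, δn k < δ₀ := fun k => lt_of_le_of_lt (hδnρ k) (hρδ₀ m)
    have hUle : ∀ k, EMetric.diam (U k) ≤ ENNReal.ofReal (δn k) := fun k => by
      have hne : EMetric.diam (U k) ≠ ⊤ := ne_top_of_le_ne_top ENNReal.ofReal_ne_top (hUdiam k)
      conv_lhs => rw [← ENNReal.ofReal_toReal hne]
      exact ENNReal.ofReal_le_ofReal (le_max_left _ _)
    choose S hScov hScard using fun k => hcov (δn k) (hδnpos k) (hδnδ₀ k)
    set V : ℕ × ℕ → Set Z := fun i =>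
      if h : i.2 < (S i.1).toList.length then
        f '' ((U i.1 ∩ A) ×ˢ (Metric.ball ((S i.1).toList.get ⟨i.2, h⟩) (δn i.1) ∩ C))
      else ∅ with hVdef
    have hVd : ∀ k j, EMetric.diam (V (k, j)) ≤ ENNReal.ofReal ((2*(K:ℝ)+2) * δn k) := by
      intro k j
      by_cases hj : j < (S k).toList.length
      · have hV : V (k, j) = f '' ((U k ∩ A) ×ˢ
            (Metric.ball ((S k).toList.get ⟨j, hj⟩) (δn k) ∩ C)) := by
          simp only [hVdef]; rw [dif_pos hj]
        rw [hV]
        apply EMetric.diam_le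
        rintro z1 ⟨⟨a1, c1⟩, ⟨⟨ha1U, ha1A⟩, hc1b, hc1C⟩, rfl⟩
          z2 ⟨⟨a2, c2⟩, ⟨⟨ha2U, ha2A⟩, hc2b, hc2C⟩, rfl⟩
        have h1 : edist (f (a1,c1)) (f (a2,c2)) ≤ K * edist (a1,c1) (a2,c2) :=
          hf ⟨ha1A, hc1C⟩ ⟨ha2A, hc2C⟩
        have hed : edist ((a1,c1) : X × Y) (a2,c2) ≤ ENNReal.ofReal (2 * δn k) := by
          rw [Prod.edist_eq]
          apply max_le
          · exact le_trans (EMetric.edist_le_diam_of_mem ha1U ha2U) ((hUle k).trans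
              (ENNReal.ofReal_le_ofReal (by linarith [hδnpos k])))
          · rw [edist_dist]
            apply ENNReal.ofReal_le_ofReal
            rw [Metric.mem_ball] at hc1b hc2b
            calc dist c1 c2 ≤ dist c1 ((S k).toList.get ⟨j, hj⟩)
                  + dist c2 ((S k).toList.get ⟨j, hj⟩) := dist_triangle_right _ _ _
              _ ≤ 2 * δn k := by linarith
        calc edist (f (a1,c1)) (f (a2,c2)) ≤ (K : ℝ≥0∞) * ENNReal.ofReal (2 * δn k) := by
              exact h1.trans (mul_le_mul_right hed _)
          _ = ENNReal.ofReal ((K:ℝ) * (2 * δn k)) := by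
              rw [ENNReal.ofReal_mul K.coe_nonneg, ENNReal.ofReal_coe_nnreal]
          _ ≤ ENNReal.ofReal ((2*(K:ℝ)+2) * δn k) := ENNReal.ofReal_le_ofReal
              (by nlinarith [hδnpos k, K.coe_nonneg])
      · have hV : V (k, j) = ∅ := by simp only [hVdef]; rw [dif_neg hj]
        simp [hV, EMetric.diam]
    refine ⟨V, ?_, ?_, ?_⟩
    · rintro z ⟨⟨a, c⟩, ⟨haA, hcC⟩, rfl⟩
      obtain ⟨k, hk⟩ := mem_iUnion.mp (hUcov haA)
      obtain ⟨x, hxS, hcx⟩ := Set.mem_iUnion₂.mp (hScov k hcC)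
      obtain ⟨j, hj, hxj⟩ := List.mem_iff_getElem.mp (Finset.mem_toList.mpr hxS)
      refine Set.mem_iUnion.mpr ⟨(k, j), ?_⟩
      have hV : V (k, j) = f '' ((U k ∩ A) ×ˢ
          (Metric.ball ((S k).toList.get ⟨j, hj⟩) (δn k) ∩ C)) := by
        simp only [hVdef]; rw [dif_pos hj]
      rw [hV]
      refine ⟨(a, c), ⟨⟨hk, haA⟩, ?_, hcC⟩, rfl⟩
      rw [List.get_eq_getElem, hxj]
      exact hcx
    · intro i
      obtain ⟨k, j⟩ := i
      exact (hVd k j).trans (ENNReal.ofReal_le_ofReal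
        (mul_le_mul_of_nonneg_left (hδnρ k) (by positivity)))
    · have hTP : (∑' i : ℕ × ℕ, EMetric.diam (V i) ^ ((s:ℝ)+(d:ℝ)))
          = ∑' k, ∑' j, EMetric.diam (V (k, j)) ^ ((s:ℝ)+(d:ℝ)) :=
        ENNReal.tsum_prod (f := fun k j => EMetric.diam (V (k, j)) ^ ((s:ℝ)+(d:ℝ)))
      rw [hTP]
      have hkey : ∀ δ : ℝ, 0 < δ → ENNReal.ofReal (1/δ) ^ (d:ℝ)
          * ENNReal.ofReal δ ^ ((s:ℝ)+(d:ℝ)) = ENNReal.ofReal δ ^ (s:ℝ) := by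
        intro δ hδ
        have hx0 : ENNReal.ofReal δ ≠ 0 := (ENNReal.ofReal_pos.mpr hδ).ne'
        have hxt : ENNReal.ofReal δ ≠ ⊤ := ENNReal.ofReal_ne_top
        rw [one_div, ENNReal.ofReal_inv_of_pos hδ, ENNReal.inv_rpow, ← ENNReal.rpow_neg,
          ← ENNReal.rpow_add _ _ hx0 hxt]
        congr 1
        ring
      have hinner : ∀ k, (∑' j, EMetric.diam (V (k, j)) ^ ((s:ℝ)+(d:ℝ)))
          ≤ M * ENNReal.ofReal (δn k) ^ (s:ℝ) := by
        intro k
        have hzero : ∀ j ∉ Finset.range (S k).toList.length,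
            EMetric.diam (V (k,j)) ^ ((s:ℝ)+(d:ℝ)) = 0 := by
          intro j hj
          rw [Finset.mem_range, not_lt] at hj
          have hV : V (k,j) = ∅ := by simp only [hVdef]; rw [dif_neg (not_lt.mpr hj)]
          rw [hV, EMetric.diam, EMetric.diam_empty, ENNReal.zero_rpow_of_pos hsd]
        rw [tsum_eq_sum hzero]
        have hterm : ∀ j ∈ Finset.range (S k).toList.length,
            EMetric.diam (V (k,j)) ^ ((s:ℝ)+(d:ℝ))
              ≤ ENNReal.ofReal ((2*(K:ℝ)+2) * δn k) ^ ((s:ℝ)+(d:ℝ)) := fun j _ =>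
          ENNReal.rpow_le_rpow (hVd k j) hsd.le
        calc (∑ j ∈ Finset.range (S k).toList.length,
              EMetric.diam (V (k,j)) ^ ((s:ℝ)+(d:ℝ)))
            ≤ (Finset.range (S k).toList.length).card
              • (ENNReal.ofReal ((2*(K:ℝ)+2) * δn k) ^ ((s:ℝ)+(d:ℝ))) :=
              Finset.sum_le_card_nsmul _ _ _ hterm
          _ = ((S k).card : ℝ≥0∞) * ENNReal.ofReal ((2*(K:ℝ)+2) * δn k) ^ ((s:ℝ)+(d:ℝ)) := by
              rw [Finset.card_range, Finset.length_toList, nsmul_eq_mul]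
          _ ≤ ENNReal.ofReal (1/δn k) ^ (d:ℝ)
              * ENNReal.ofReal ((2*(K:ℝ)+2) * δn k) ^ ((s:ℝ)+(d:ℝ)) :=
              mul_le_mul_left (hScard k) _
          _ = M * (ENNReal.ofReal (1/δn k) ^ (d:ℝ)
              * ENNReal.ofReal (δn k) ^ ((s:ℝ)+(d:ℝ))) := by
              rw [ENNReal.ofReal_mul (by positivity),
                ENNReal.mul_rpow_of_nonneg _ _ hsd.le, hMdef]
              ring
          _ = M * ENNReal.ofReal (δn k) ^ (s:ℝ) := by rw [hkey _ (hδnpos k)]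
      calc (∑' k, ∑' j, EMetric.diam (V (k, j)) ^ ((s:ℝ)+(d:ℝ)))
          ≤ ∑' k, M * ENNReal.ofReal (δn k) ^ (s:ℝ) := ENNReal.tsum_le_tsum hinner
        _ = M * ∑' k, ENNReal.ofReal (δn k) ^ (s:ℝ) := ENNReal.tsum_mul_left
        _ ≤ M * (1 + G) := by
            apply mul_le_mul_right
            have hsplit : ∀ k, ENNReal.ofReal (δn k) ^ (s:ℝ)
                ≤ EMetric.diam (U k) ^ (s:ℝ) + ENNReal.ofReal (ρ m * 2⁻¹ ^ k) ^ (s:ℝ) := by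
              intro k
              have hδnk : δn k = max (EMetric.diam (U k)).toReal (ρ m * 2⁻¹ ^ k) := rfl
              rcases max_cases (EMetric.diam (U k)).toReal (ρ m * 2⁻¹ ^ k) with ⟨heq, _⟩ | ⟨heq, _⟩
              · rw [hδnk, heq]
                have hne : EMetric.diam (U k) ≠ ⊤ :=
                  ne_top_of_le_ne_top ENNReal.ofReal_ne_top (hUdiam k)
                rw [ENNReal.ofReal_toReal hne]
                exact le_self_add
              · rw [hδnk, heq]
                exact le_add_self
            calc (∑' k, ENNReal.ofReal (δn k) ^ (s:ℝ))
                ≤ ∑' k, (EMetric.diam (U k) ^ (s:ℝ)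
                  + ENNReal.ofReal (ρ m * 2⁻¹ ^ k) ^ (s:ℝ)) := ENNReal.tsum_le_tsum hsplit
              _ = (∑' k, EMetric.diam (U k) ^ (s:ℝ))
                  + ∑' k, ENNReal.ofReal (ρ m * 2⁻¹ ^ k) ^ (s:ℝ) := ENNReal.tsum_add
              _ ≤ 1 + G := by
                  apply add_le_add
                  · have heq2 : (∑' k, EMetric.diam (U k) ^ (s:ℝ))
                        = ∑' k, ⨆ _ : (U k).Nonempty, EMetric.diam (U k) ^ (s:ℝ) :=
                      tsum_congr fun k => by
                        rcases eq_empty_or_nonempty (U k) with h | h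
                        · simp [h, EMetric.diam, EMetric.diam_empty, ENNReal.zero_rpow_of_pos hs']
                        · rw [iSup_pos h]
                    rw [heq2]
                    exact hUsum.le
                  · apply ENNReal.tsum_le_tsum
                    intro k
                    rw [ENNReal.ofReal_mul (hρpos m).le,
                      ENNReal.mul_rpow_of_nonneg _ _ hs'.le]
                    have hb1 : ENNReal.ofReal (ρ m) ^ (s:ℝ) ≤ 1 :=
                      ENNReal.rpow_le_one (ENNReal.ofReal_le_one.mpr (hρ1 m)) hs'.le
                    calc ENNReal.ofReal (ρ m) ^ (s:ℝ) * ENNReal.ofReal (2⁻¹ ^ k) ^ (s:ℝ)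
                        ≤ 1 * ENNReal.ofReal (2⁻¹ ^ k) ^ (s:ℝ) := mul_le_mul_left hb1 _
                      _ = ((((2:ℝ≥0∞))⁻¹ ^ (s:ℝ)) ^ k) := by
                          rw [one_mul, ENNReal.ofReal_pow (by norm_num : (0:ℝ) ≤ 2⁻¹),
                            ENNReal.ofReal_inv_of_pos two_pos, ENNReal.ofReal_ofNat,
                            ← ENNReal.rpow_natCast ((2:ℝ≥0∞)⁻¹) k, ← ENNReal.rpow_mul,
                            mul_comm, ENNReal.rpow_mul, ENNReal.rpow_natCast]
  choose t ht1 ht2 ht3 using hcovers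
  have hμ : μH[(s:ℝ)+(d:ℝ)] (f '' (A ×ˢ C)) ≤ B := by
    have hr : Tendsto (fun m : ℕ => ENNReal.ofReal ((2*(K:ℝ)+2) * ρ m)) atTop (𝓝 0) := by
      have h0 : Tendsto ρ atTop (𝓝 0) := by
        rw [hρdef]
        have := (tendsto_pow_atTop_nhds_zero_of_lt_one (by norm_num : (0:ℝ) ≤ 2⁻¹)
          (by norm_num : (2⁻¹:ℝ) < 1)).const_mul (min δ₀ 1 / 2)
        rw [mul_zero] at this
        exact this
      have h1 : Tendsto (fun m => (2*(K:ℝ)+2) * ρ m) atTop (𝓝 0) := by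
        have := h0.const_mul (2*(K:ℝ)+2)
        rw [mul_zero] at this
        exact this
      have := (ENNReal.continuous_ofReal.tendsto 0).comp h1
      simpa [Function.comp_def] using this
    have hle := MeasureTheory.Measure.hausdorffMeasure_le_liminf_tsum (ι := fun _ : ℕ => ℕ × ℕ)
      ((s:ℝ)+(d:ℝ)) (f '' (A ×ˢ C)) (fun m => ENNReal.ofReal ((2*(K:ℝ)+2) * ρ m)) hr
      t (Eventually.of_forall ht2) (Eventually.of_forall ht1)
    refine hle.trans ?_
    calc liminf (fun m => ∑' i, EMetric.diam (t m i) ^ ((s:ℝ)+(d:ℝ))) atTop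
        ≤ liminf (fun _ => B) atTop := liminf_le_liminf (Eventually.of_forall ht3)
      _ = B := liminf_const B
  have : dimH (f '' (A ×ˢ C)) ≤ ((s + d : ℝ≥0) : ℝ≥0∞) := by
    apply dimH_le_of_hausdorffMeasure_ne_top
    have : ((s + d : ℝ≥0) : ℝ) = (s:ℝ) + (d:ℝ) := by push_cast; ring
    rw [this]
    exact ne_top_of_le_ne_top hBne hμ
  simpa using this

/-- Adding directions: lines are parametrized by (slope, intercept) pairs
`(a,b) ↦ ℓ(a,b) = {(t, t•a+b)}` in `ℝ × ℝⁿ ≅ ℝ^(n+1)`. -/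
theorem stmt16 (n : ℕ)
    (L : Set (EuclideanSpace ℝ (Fin n) × EuclideanSpace ℝ (Fin n)))
    (E : Set (ℝ × EuclideanSpace ℝ (Fin n)))
    (C : Set (EuclideanSpace ℝ (Fin n))) (hC : Bornology.IsBounded C) :
    ∃ (L' : Set (EuclideanSpace ℝ (Fin n) × EuclideanSpace ℝ (Fin n)))
      (E' : Set (ℝ × EuclideanSpace ℝ (Fin n))),
      dimH E' ≤ dimH E + ubDim C ∧
      Prod.fst '' L' = (Prod.fst '' L) + C ∧
      (∀ l' ∈ L', ∃ l ∈ L,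
        Prod.fst '' (E ∩ {p : ℝ × EuclideanSpace ℝ (Fin n) | ∃ t : ℝ, p = (t, t • l.1 + l.2)}) ⊆
        Prod.fst '' (E' ∩ {p : ℝ × EuclideanSpace ℝ (Fin n) | ∃ t : ℝ, p = (t, t • l'.1 + l'.2)})) ∧
      (IsCompact E → IsCompact C → IsCompact E') := by
  classical
  set h : (ℝ × EuclideanSpace ℝ (Fin n)) × EuclideanSpace ℝ (Fin n)
      → ℝ × EuclideanSpace ℝ (Fin n) :=
    fun q => (q.1.1, q.1.2 + q.1.1 • q.2) with hhdef
  have hhcont : Continuous h := by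
    rw [hhdef]; fun_prop
  set E' : Set (ℝ × EuclideanSpace ℝ (Fin n)) := h '' (E ×ˢ C) with hE'def
  set L' : Set (EuclideanSpace ℝ (Fin n) × EuclideanSpace ℝ (Fin n)) :=
    (fun q : (EuclideanSpace ℝ (Fin n) × EuclideanSpace ℝ (Fin n)) × EuclideanSpace ℝ (Fin n) =>
      (q.1.1 + q.2, q.1.2)) '' (L ×ˢ C) with hL'def
  refine ⟨L', E', ?_, ?_, ?_, ?_⟩
  · -- dimension bound
    rcases eq_empty_or_nonempty C with hCe | hCne
    · have : E' = ∅ := by rw [hE'def, hCe]; simp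
      rw [this, dimH_empty]
      exact zero_le
    obtain ⟨MC₀, hMC₀⟩ := hC.subset_closedBall 0
    set MC : ℝ := max MC₀ 0 with hMCdef
    have hMC : 0 ≤ MC := le_max_right _ _
    have hCMC : C ⊆ Metric.closedBall 0 MC :=
      hMC₀.trans (Metric.closedBall_subset_closedBall (le_max_left _ _))
    have hcover : E' ⊆ ⋃ k : ℕ, h '' ((E ∩ Metric.closedBall 0 k) ×ˢ C) := by
      rintro z ⟨⟨p, c⟩, ⟨hpE, hcC⟩, rfl⟩
      obtain ⟨k, hk⟩ := exists_nat_ge (dist p 0)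
      exact Set.mem_iUnion.mpr ⟨k, ⟨(p, c), ⟨⟨hpE, Metric.mem_closedBall.mpr hk⟩, hcC⟩, rfl⟩⟩
    refine (dimH_mono hcover).trans ?_
    rw [dimH_iUnion]
    apply iSup_le
    intro k
    set Kr : ℝ≥0 := ⟨1 + MC + k, by positivity⟩ with hKrdef
    have hKr1 : (1:ℝ) ≤ (Kr:ℝ) := by
      rw [hKrdef]; change (1:ℝ) ≤ 1 + MC + k
      have : (0:ℝ) ≤ (k:ℝ) := Nat.cast_nonneg k
      linarith
    have hlip : LipschitzOnWith Kr h ((E ∩ Metric.closedBall 0 k) ×ˢ C) := by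
      rw [lipschitzOnWith_iff_dist_le_mul]
      rintro ⟨⟨t, u⟩, c⟩ ⟨⟨_, hpB⟩, hcC⟩ ⟨⟨t', u'⟩, c'⟩ ⟨⟨_, hqB⟩, hc'C⟩
      have hcn : ‖c‖ ≤ MC := by
        have := hCMC hcC
        rwa [Metric.mem_closedBall, dist_zero_right] at this
      have ht' : |t'| ≤ k := by
        rw [Metric.mem_closedBall] at hqB
        have h0 : dist ((t', u') : ℝ × EuclideanSpace ℝ (Fin n)) 0
            = max (dist t' 0) (dist u' 0) := Prod.dist_eq
        rw [h0] at hqB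
        have h1 : |t'| = dist t' 0 := by rw [Real.dist_eq, sub_zero]
        rw [h1]
        exact (le_max_left _ _).trans hqB
      set D := dist ((((t,u),c)) : (ℝ × EuclideanSpace ℝ (Fin n)) × EuclideanSpace ℝ (Fin n))
        (((t',u'),c')) with hDdef
      have hD0 : (0:ℝ) ≤ D := dist_nonneg
      have hDeq : D = max (max (dist t t') (dist u u')) (dist c c') := by
        rw [hDdef]
        have e1 : dist ((((t,u),c)) : (ℝ × EuclideanSpace ℝ (Fin n)) × EuclideanSpace ℝ (Fin n))
            (((t',u'),c')) = max (dist ((t,u) : ℝ × EuclideanSpace ℝ (Fin n)) (t',u'))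
              (dist c c') := Prod.dist_eq
        have e2 : dist ((t,u) : ℝ × EuclideanSpace ℝ (Fin n)) (t',u')
            = max (dist t t') (dist u u') := Prod.dist_eq
        rw [e1, e2]
      have hD1 : |t - t'| ≤ D := by
        rw [hDeq, ← Real.dist_eq]
        exact le_max_of_le_left (le_max_left _ _)
      have hD2 : dist u u' ≤ D := by
        rw [hDeq]; exact le_max_of_le_left (le_max_right _ _)
      have hD3 : dist c c' ≤ D := by
        rw [hDeq]; exact le_max_right _ _
      have hgoal : dist (h ((t,u),c)) (h ((t',u'),c')) =
          max (dist t t') (dist (u + t • c) (u' + t' • c')) := by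
        rw [hhdef]
        exact Prod.dist_eq
      rw [hgoal]
      apply max_le
      · calc dist t t' = |t - t'| := Real.dist_eq _ _
          _ ≤ D := hD1
          _ ≤ (Kr:ℝ) * D := le_mul_of_one_le_left hD0 hKr1
      · rw [dist_eq_norm]
        have hident : (u + t • c) - (u' + t' • c') =
            (u - u') + ((t - t') • c + t' • (c - c')) := by
          rw [sub_smul, smul_sub]; abel
        rw [hident]
        have hKrval : (Kr:ℝ) = 1 + MC + k := rfl
        calc ‖(u - u') + ((t - t') • c + t' • (c - c'))‖
            ≤ ‖u - u'‖ + (‖(t - t') • c‖ + ‖t' • (c - c')‖) :=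
              (norm_add_le _ _).trans (by gcongr; exact norm_add_le _ _)
          _ = ‖u - u'‖ + (|t - t'| * ‖c‖ + |t'| * ‖c - c'‖) := by
              rw [norm_smul, norm_smul, Real.norm_eq_abs, Real.norm_eq_abs]
          _ ≤ D + (D * MC + k * D) := by
              have h1 : ‖u - u'‖ ≤ D := by rwa [← dist_eq_norm]
              have h2 : ‖c - c'‖ ≤ D := by rwa [← dist_eq_norm]
              have h3 : |t - t'| * ‖c‖ ≤ D * MC :=
                mul_le_mul hD1 hcn (norm_nonneg _) hD0
              have h4 : |t'| * ‖c - c'‖ ≤ k * D :=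
                mul_le_mul ht' h2 (norm_nonneg _) (Nat.cast_nonneg k)
              linarith
          _ = (Kr:ℝ) * D := by rw [hKrval]; ring
    have hEtop : dimH E ≠ ⊤ := by
      have h1 : dimH E ≤ dimH (Set.univ : Set (ℝ × EuclideanSpace ℝ (Fin n))) :=
        dimH_mono (Set.subset_univ _)
      rw [Real.dimH_univ_eq_finrank (ℝ × EuclideanSpace ℝ (Fin n))] at h1
      exact ne_top_of_le_ne_top (ENNReal.natCast_ne_top _) h1
    have hUtop : ubDim C ≠ ⊤ := ENNReal.ofReal_ne_top
    apply ENNReal.le_of_forall_pos_le_add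
    intro ε hε _
    have hε2 : (0:ℝ≥0) < ε/2 := by positivity
    set s : ℝ≥0 := (dimH E).toNNReal + ε/2 with hsdef
    set d : ℝ≥0 := (ubDim C).toNNReal + ε/2 with hddef
    have hdimE : dimH E = ((dimH E).toNNReal : ℝ≥0∞) := (ENNReal.coe_toNNReal hEtop).symm
    have hub : ubDim C = ((ubDim C).toNNReal : ℝ≥0∞) := (ENNReal.coe_toNNReal hUtop).symm
    have hAs : dimH (E ∩ Metric.closedBall 0 k) < s := by
      refine lt_of_le_of_lt (dimH_mono Set.inter_subset_left) ?_
      rw [hdimE]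
      exact_mod_cast lt_add_of_pos_right _ hε2
    have hds : ubDim C < d := by
      rw [hub]
      exact_mod_cast lt_add_of_pos_right _ hε2
    have hspos : (0:ℝ≥0) < s := lt_of_lt_of_le hε2 le_add_self
    obtain ⟨δ₀, hδ₀, hcov⟩ := cov_extract hC hds
    have hco := core (E ∩ Metric.closedBall 0 (k:ℝ)) C h Kr hlip s d hspos hAs δ₀ hδ₀ hcov
    refine hco.trans ?_
    rw [hdimE, hub, hsdef, hddef]
    rw [← ENNReal.coe_add, ← ENNReal.coe_add, ← ENNReal.coe_add]
    apply ENNReal.coe_le_coe.mpr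
    apply le_of_eq
    have hhalf : ε/2 + ε/2 = ε := add_halves ε
    calc (dimH E).toNNReal + ε/2 + ((ubDim C).toNNReal + ε/2)
        = (dimH E).toNNReal + (ubDim C).toNNReal + (ε/2 + ε/2) := by
          generalize ε/2 = e
          ring
      _ = (dimH E).toNNReal + (ubDim C).toNNReal + ε := by rw [hhalf]
  · -- slopes
    ext x
    constructor
    · rintro ⟨l', ⟨⟨⟨a, b⟩, c⟩, ⟨hL, hc⟩, rfl⟩, rfl⟩
      exact Set.add_mem_add ⟨(a,b), hL, rfl⟩ hc
    · intro hx
      rw [Set.mem_add] at hx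
      obtain ⟨a, ha, c, hc, rfl⟩ := hx
      obtain ⟨⟨a', b⟩, hL, rfl⟩ := ha
      exact ⟨((a', b).1 + c, (a',b).2), ⟨((a',b), c), ⟨hL, hc⟩, rfl⟩, rfl⟩
  · -- lines
    rintro l' ⟨⟨⟨a, b⟩, c⟩, ⟨hL, hcC⟩, rfl⟩
    refine ⟨(a, b), hL, ?_⟩
    rintro x ⟨⟨t, v⟩, ⟨hpE, ⟨t', hline⟩⟩, rfl⟩
    have ht : t = t' := congrArg Prod.fst hline
    subst ht
    have hv : v = t • a + b := congrArg Prod.snd hline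
    subst hv
    refine ⟨(t, t • a + b + t • c), ⟨⟨((t, t • a + b), c), ⟨hpE, hcC⟩, rfl⟩, ⟨t, ?_⟩⟩, rfl⟩
    rw [Prod.ext_iff]
    refine ⟨rfl, ?_⟩
    simp only [smul_add]
    abel
  · -- compactness
    intro hE hCc
    exact (hE.prod hCc).image hhcont
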